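/- Under Assumption 3, for every x ∈ 𝒳, t ∈ 𝒯 and y ∈ 𝒴 such that P(X=x, T=t, R^X=1, R^T=1) > 0, P(T=t, Y=y, R^X=1, R^T=1) > 0, and P(R^Y=1 | T=t, Y=y, R^X=1, R^T=1) > 0, the inverse-probability-weighting identity holds: P(Y=y | X=x, T=t) = P(Y=y, R^Y=1 | X=x, T=t, R^X=1, R^T=1) / P(R^Y=1 | T=t, Y=y, R^X=1, R^T=1). -/

import Mathlib

open scoped Classical
noncomputable section

namespace CATEMNAR

variable {Ω : Type*} [Fintype Ω]

def Pr (p : Ω → ℝ) (E : Ω → Prop) : ℝ := ∑ ω, if E ω then p ω else 0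

def CPr (p : Ω → ℝ) (E C : Ω → Prop) : ℝ := Pr p (fun ω => E ω ∧ C ω) / Pr p C

def CondIndep {α β γ : Type*} (p : Ω → ℝ) (A : Ω → α) (B : Ω → β) (C : Ω → γ) : Prop :=
  ∀ (a : α) (b : β) (c : γ), 0 < Pr p (fun ω => C ω = c) →
    CPr p (fun ω => A ω = a ∧ B ω = b) (fun ω => C ω = c) =
      CPr p (fun ω => A ω = a) (fun ω => C ω = c) *
        CPr p (fun ω => B ω = b) (fun ω => C ω = c)

lemma Pr_nonneg {p : Ω → ℝ} (hp0 : ∀ ω, 0 ≤ p ω) (E : Ω → Prop) : 0 ≤ Pr p E :=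
  Finset.sum_nonneg fun ω _ => by by_cases h : E ω <;> simp [Pr, h, hp0 ω]

lemma Pr_mono {p : Ω → ℝ} (hp0 : ∀ ω, 0 ≤ p ω) {E F : Ω → Prop}
    (h : ∀ ω, E ω → F ω) : Pr p E ≤ Pr p F :=
  Finset.sum_le_sum fun ω _ => by
    by_cases hE : E ω
    · simp [hE, h ω hE]
    · by_cases hF : F ω <;> simp [hE, hF, hp0 ω]

lemma Pr_congr {p : Ω → ℝ} {E F : Ω → Prop} (h : ∀ ω, E ω ↔ F ω) : Pr p E = Pr p F :=
  Finset.sum_congr rfl fun ω _ => if_congr (h ω) rfl rfl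

lemma CPr_congr {p : Ω → ℝ} {E E' C C' : Ω → Prop} (hE : ∀ ω, E ω ↔ E' ω)
    (hC : ∀ ω, C ω ↔ C' ω) : CPr p E C = CPr p E' C' := by
  unfold CPr
  rw [Pr_congr (fun ω => and_congr (hE ω) (hC ω)), Pr_congr hC]

lemma CondIndep.symm' {α β γ : Type*} {p : Ω → ℝ} {A : Ω → α} {B : Ω → β} {C : Ω → γ}
    (h : CondIndep p A B C) : CondIndep p B A C := fun b a c hc => by
  have := h a b c hc
  rw [CPr_congr (fun ω => and_comm) (fun ω => Iff.rfl) ] at this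
  rw [this]; ring

lemma drop_cond {p : Ω → ℝ} (hp0 : ∀ ω, 0 ≤ p ω) {α β γ : Type*}
    {A : Ω → α} {B : Ω → β} {C : Ω → γ} (h : CondIndep p A B C) (a : α) (b : β) (c : γ)
    (hpos : 0 < Pr p (fun ω => C ω = c ∧ A ω = a)) :
    CPr p (fun ω => B ω = b) (fun ω => C ω = c ∧ A ω = a)
      = CPr p (fun ω => B ω = b) (fun ω => C ω = c) := by
  have hC : 0 < Pr p (fun ω => C ω = c) :=
    lt_of_lt_of_le hpos (Pr_mono hp0 fun ω hω => hω.1)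
  have hci := h a b c hC
  unfold CPr at hci ⊢
  rw [Pr_congr (show ∀ ω, (B ω = b ∧ (C ω = c ∧ A ω = a)) ↔
      ((A ω = a ∧ B ω = b) ∧ C ω = c) from fun ω => by tauto),
    Pr_congr (show ∀ ω, (C ω = c ∧ A ω = a) ↔ (A ω = a ∧ C ω = c) from fun ω => by tauto)]
  have hA : 0 < Pr p (fun ω => A ω = a ∧ C ω = c) := by
    rwa [Pr_congr (show ∀ ω, (A ω = a ∧ C ω = c) ↔ (C ω = c ∧ A ω = a) from fun ω => by tauto)]
  field_simp at hci ⊢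
  nlinarith [hci, hC, hA]

/-- Under Assumption 3, the inverse-probability-weighting identity holds:
`P(Y=y | X=x, T=t)
  = P(Y=y, R^Y=1 | X=x, T=t, R^X=1, R^T=1) / P(R^Y=1 | T=t, Y=y, R^X=1, R^T=1)`. -/
theorem stmt_13 {𝒳 𝒯 𝒴 : Type*} [Fintype 𝒳] [Fintype 𝒯] [Fintype 𝒴]
    (p : Ω → ℝ) (hp0 : ∀ ω, 0 ≤ p ω) (hp1 : ∑ ω, p ω = 1)
    (X : Ω → 𝒳) (T : Ω → 𝒯) (Y : Ω → 𝒴) (RX RT RY : Ω → Bool)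
    (hRX : CondIndep p RX Y (fun ω => (X ω, T ω)))
    (hRT : CondIndep p RT Y (fun ω => (X ω, T ω, RX ω)))
    (hRY : CondIndep p RY X (fun ω => (T ω, Y ω, RX ω, RT ω)))
    (x : 𝒳) (t : 𝒯) (y : 𝒴)
    (hpos1 : 0 < Pr p (fun ω => X ω = x ∧ T ω = t ∧ RX ω = true ∧ RT ω = true))
    (hpos2 : 0 < Pr p (fun ω => T ω = t ∧ Y ω = y ∧ RX ω = true ∧ RT ω = true))
    (hpos3 : 0 < CPr p (fun ω => RY ω = true)
      (fun ω => T ω = t ∧ Y ω = y ∧ RX ω = true ∧ RT ω = true)) :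
    CPr p (fun ω => Y ω = y) (fun ω => X ω = x ∧ T ω = t) =
      CPr p (fun ω => Y ω = y ∧ RY ω = true)
          (fun ω => X ω = x ∧ T ω = t ∧ RX ω = true ∧ RT ω = true) /
        CPr p (fun ω => RY ω = true)
          (fun ω => T ω = t ∧ Y ω = y ∧ RX ω = true ∧ RT ω = true) := by
  -- the conditioning event D
  -- Step 1: drop RX then RT from the conditioning of the LHS
  have hpos2' : 0 < Pr p (fun ω => (X ω, T ω) = (x, t) ∧ RX ω = true) :=
    lt_of_lt_of_le hpos1 (Pr_mono hp0 fun ω h => ⟨by simp [h.1, h.2.1], h.2.2.1⟩)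
  have h2 := drop_cond hp0 hRX true y (x, t) hpos2'
  have hpos3' : 0 < Pr p (fun ω => (X ω, T ω, RX ω) = (x, t, true) ∧ RT ω = true) :=
    lt_of_lt_of_le hpos1 (Pr_mono hp0 fun ω h => ⟨by simp [h.1, h.2.1, h.2.2.1], h.2.2.2⟩)
  have h3 := drop_cond hp0 hRT true y (x, t, true) hpos3'
  have hmain : CPr p (fun ω => Y ω = y) (fun ω => X ω = x ∧ T ω = t)
      = CPr p (fun ω => Y ω = y)
          (fun ω => X ω = x ∧ T ω = t ∧ RX ω = true ∧ RT ω = true) := by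
    rw [CPr_congr (E' := fun ω => Y ω = y) (C' := fun ω => (X ω, T ω) = (x, t))
      (fun ω => Iff.rfl) (fun ω => by simp [Prod.ext_iff]), ← h2,
      CPr_congr (E' := fun ω => Y ω = y)
        (C' := fun ω => (X ω, T ω, RX ω) = (x, t, true))
        (fun ω => Iff.rfl) (fun ω => by simp [Prod.ext_iff]; tauto), ← h3]
    exact CPr_congr (fun ω => Iff.rfl) (fun ω => by simp [Prod.ext_iff]; tauto)
  rw [hmain]
  have hπ : CPr p (fun ω => RY ω = true)
      (fun ω => T ω = t ∧ Y ω = y ∧ RX ω = true ∧ RT ω = true) ≠ 0 := ne_of_gt hpos3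
  have hD : Pr p (fun ω => X ω = x ∧ T ω = t ∧ RX ω = true ∧ RT ω = true) ≠ 0 :=
    ne_of_gt hpos1
  by_cases hE : 0 < Pr p (fun ω => X ω = x ∧ T ω = t ∧ Y ω = y ∧ RX ω = true ∧ RT ω = true)
  · -- positive case
    have hE' : 0 < Pr p (fun ω => (T ω, Y ω, RX ω, RT ω) = (t, y, true, true) ∧ X ω = x) := by
      rwa [Pr_congr (show ∀ ω, ((T ω, Y ω, RX ω, RT ω) = (t, y, true, true) ∧ X ω = x) ↔
        (X ω = x ∧ T ω = t ∧ Y ω = y ∧ RX ω = true ∧ RT ω = true) from fun ω => by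
          simp [Prod.ext_iff]; tauto)]
    have hπeq := drop_cond hp0 hRY.symm' x true (t, y, true, true) hE'
    have hπ2 : CPr p (fun ω => RY ω = true)
        (fun ω => T ω = t ∧ Y ω = y ∧ RX ω = true ∧ RT ω = true)
        = CPr p (fun ω => RY ω = true)
            (fun ω => (T ω, Y ω, RX ω, RT ω) = (t, y, true, true)) :=
      CPr_congr (fun ω => Iff.rfl) (fun ω => by simp [Prod.ext_iff])
    -- numerator identity
    have hnum : Pr p (fun ω => (Y ω = y ∧ RY ω = true) ∧
        (X ω = x ∧ T ω = t ∧ RX ω = true ∧ RT ω = true))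
        = CPr p (fun ω => RY ω = true)
            (fun ω => (T ω, Y ω, RX ω, RT ω) = (t, y, true, true) ∧ X ω = x)
          * Pr p (fun ω => (T ω, Y ω, RX ω, RT ω) = (t, y, true, true) ∧ X ω = x) := by
      rw [CPr, div_mul_cancel₀ _ (ne_of_gt hE')]
      exact Pr_congr fun ω => by simp [Prod.ext_iff]; tauto
    have hnum2 : Pr p (fun ω => Y ω = y ∧
        (X ω = x ∧ T ω = t ∧ RX ω = true ∧ RT ω = true))
        = Pr p (fun ω => (T ω, Y ω, RX ω, RT ω) = (t, y, true, true) ∧ X ω = x) :=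
      Pr_congr fun ω => by simp [Prod.ext_iff]; tauto
    have hπ3 : CPr p (fun ω => RY ω = true)
        (fun ω => (T ω, Y ω, RX ω, RT ω) = (t, y, true, true)) ≠ 0 := by
      rw [← hπ2]; exact hπ
    rw [CPr, CPr, hnum, hnum2, hπeq, hπ2]
    field_simp
  · -- degenerate case: P(X,T,Y,RX,RT) = 0, both sides vanish
    have hE0 : Pr p (fun ω => X ω = x ∧ T ω = t ∧ Y ω = y ∧ RX ω = true ∧ RT ω = true) = 0 :=
      le_antisymm (not_lt.mp hE) (Pr_nonneg hp0 _)
    have hL : Pr p (fun ω => Y ω = y ∧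
        (X ω = x ∧ T ω = t ∧ RX ω = true ∧ RT ω = true)) = 0 := by
      rw [Pr_congr (show ∀ ω, _ ↔ (X ω = x ∧ T ω = t ∧ Y ω = y ∧ RX ω = true ∧ RT ω = true)
        from fun ω => by tauto)]
      exact hE0
    have hR : Pr p (fun ω => (Y ω = y ∧ RY ω = true) ∧
        (X ω = x ∧ T ω = t ∧ RX ω = true ∧ RT ω = true)) = 0 :=
      le_antisymm (by
        calc Pr p _ ≤ Pr p (fun ω => X ω = x ∧ T ω = t ∧ Y ω = y ∧ RX ω = true ∧ RT ω = true) :=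
              Pr_mono hp0 fun ω h => ⟨h.2.1, h.2.2.1, h.1.1, h.2.2.2⟩
          _ = 0 := hE0) (Pr_nonneg hp0 _)
    rw [CPr, CPr, hL, hR]
    simp

end CATEMNAR
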